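/- arXiv:2003.11019 — 4 statements merged into one kernel-verified Lean document; each statement's English description precedes it below -/
import Mathlib

section
/- In the 3-dimensional example one has ∇ₓξ = -φx for all x ∈ 𝔤. -/
noncomputable section

/-- The underlying 3-dimensional real vector space. -/
abbrev V3 := Fin 3 → ℝ

/-- The basis `(e₁, e₂, e₃)` (standard basis of `ℝ³`). -/
def e3 (i : Fin 3) : V3 := Pi.single i 1

/-- The Lie bracket: the bilinear extension of
`[e₃, e₁] = e₂`, `[e₃, e₂] = -e₁`, `[e₁, e₂] = 0`. -/
def br3 (x y : V3) : V3 :=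
  ![x 1 * y 2 - x 2 * y 1, x 2 * y 0 - x 0 * y 2, 0]

/-- The B-metric `g`: `g(e₁,e₁) = 1`, `g(e₂,e₂) = -1`, `g(e₃,e₃) = 1`,
`g(eᵢ,eⱼ) = 0` for `i ≠ j`. -/
def gM3 (x y : V3) : ℝ := x 0 * y 0 - x 1 * y 1 + x 2 * y 2

/-- The structure endomorphism `φ`: `φe₁ = e₂`, `φe₂ = -e₁`, `φe₃ = 0`. -/
def phi3 (x : V3) : V3 := ![-(x 1), x 0, 0]

/-- The Reeb vector field `ξ = e₃`. -/
def xi3 : V3 := e3 2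

/-- The contact form `η`: `η(e₁) = η(e₂) = 0`, `η(e₃) = 1`. -/
def eta3 (x : V3) : ℝ := x 2

/-- The Koszul formula for the Levi-Civita connection of a left-invariant metric. -/
def Koszul3 (nabla : V3 → V3 → V3) : Prop :=
  ∀ x y z : V3,
    2 * gM3 (nabla x y) z = gM3 (br3 x y) z - gM3 (br3 y z) x + gM3 (br3 z x) y

/-- The curvature tensor `R(x,y)z = ∇ₓ∇_y z - ∇_y ∇ₓ z - ∇_{[x,y]} z`. -/
def R3 (nabla : V3 → V3 → V3) (x y z : V3) : V3 :=
  nabla x (nabla y z) - nabla y (nabla x z) - nabla (br3 x y) z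

/-- The Ricci tensor `ρ(y,z)`: the trace of the map `x ↦ R(x,y)z`,
computed in the standard basis. -/
def ric3 (nabla : V3 → V3 → V3) (y z : V3) : ℝ :=
  ∑ i : Fin 3, R3 nabla (e3 i) y z i

/-- In the 3-dimensional example, `∇ₓξ = -φx` for all `x`. -/
theorem nabla_xi_3dim (nabla : V3 → V3 → V3) (hK : Koszul3 nabla) :
    ∀ x : V3, nabla x xi3 = -(phi3 x) := by
  intro x
  have h0 := hK x xi3 (e3 0)
  have h1 := hK x xi3 (e3 1)
  have h2 := hK x xi3 (e3 2)
  simp [gM3, br3, xi3, e3, Pi.single, Function.update] at h0 h1 h2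
  funext i
  fin_cases i <;> simp [phi3, xi3, e3, Pi.single] <;> linarith
end
end

section
/- The 3-dimensional example is Sasaki-like: for all x, y ∈ 𝔤 one has ∇ₓ(φy) - φ(∇ₓy) = -g(x, y)ξ - η(y)x + 2η(x)η(y)ξ. -/
noncomputable section

lemma nabla_eq3 (nabla : V3 → V3 → V3) (hK : Koszul3 nabla) (x y : V3) :
    nabla x y = ![x 1 * y 2, -(x 0 * y 2), -(x 0 * y 1 + x 1 * y 0)] := by
  funext i
  fin_cases i
  · have h := hK x y (e3 0)
    simp [gM3, br3, e3, Pi.single_apply] at h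
    show nabla x y 0 = _
    norm_num
    linarith
  · have h := hK x y (e3 1)
    simp [gM3, br3, e3, Pi.single_apply] at h
    show nabla x y 1 = _
    norm_num
    linarith
  · have h := hK x y (e3 2)
    simp [gM3, br3, e3, Pi.single_apply] at h
    show nabla x y 2 = _
    norm_num
    linarith

/-- The 3-dimensional example is Sasaki-like:
`(∇ₓφ)y = ∇ₓ(φy) - φ(∇ₓy) = -g(x,y)ξ - η(y)x + 2η(x)η(y)ξ` for all `x, y`. -/
theorem sasaki_like_3dim (nabla : V3 → V3 → V3) (hK : Koszul3 nabla) :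
    ∀ x y : V3,
      nabla x (phi3 y) - phi3 (nabla x y)
        = -(gM3 x y) • xi3 - eta3 y • x + (2 * (eta3 x * eta3 y)) • xi3 := by
  intro x y
  rw [nabla_eq3 nabla hK, nabla_eq3 nabla hK]
  funext i
  fin_cases i <;>
    simp [phi3, gM3, eta3, xi3, e3, Pi.single_apply, Pi.sub_apply, Pi.add_apply,
      Pi.smul_apply, smul_eq_mul] <;> ring
end
end

section
/- For the curvature tensor R(x, y)z = ∇ₓ∇_y z - ∇_y∇ₓ z - ∇_{[x,y]} z of the 3-dimensional example, with R(x,y,z,w) = g(R(x,y)z, w), the components satisfy R(e₁,e₂,e₂,e₁) = 1, R(e₁,e₃,e₃,e₁) = 1 and R(e₂,e₃,e₃,e₂) = -1. -/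
noncomputable section

/-! The metric `g` is nondegenerate, so the Koszul formula determines `∇`: it suffices to exhibit
one solution `nabla3`, and the curvature components of `nabla3` are a direct computation. -/

theorem e3_zero : e3 0 = ![1, 0, 0] := by
  ext i; fin_cases i <;> simp [e3]

theorem e3_one : e3 1 = ![0, 1, 0] := by
  ext i; fin_cases i <;> simp [e3]

theorem e3_two : e3 2 = ![0, 0, 1] := by
  ext i; fin_cases i <;> simp [e3]

theorem eq_of_forall_gM3_eq {v w : V3} (h : ∀ z, gM3 v z = gM3 w z) : v = w := by
  funext i
  fin_cases i
  · simpa [gM3, e3_zero] using h (e3 0)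
  · simpa [gM3, e3_one] using h (e3 1)
  · simpa [gM3, e3_two] using h (e3 2)

theorem Koszul3.unique {nabla nabla' : V3 → V3 → V3} (h : Koszul3 nabla) (h' : Koszul3 nabla') :
    nabla = nabla' := by
  funext x y
  exact eq_of_forall_gM3_eq fun z => by linarith [h x y z, h' x y z]

def nabla3 (x y : V3) : V3 :=
  ![x 1 * y 2, -(x 0 * y 2), -(x 0 * y 1 + x 1 * y 0)]

theorem koszul3_nabla3 : Koszul3 nabla3 := by
  intro x y z
  simp only [gM3, br3, nabla3, Matrix.cons_val_zero, Matrix.cons_val_one, Matrix.cons_val_two,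
    Matrix.head_cons, Matrix.tail_cons]
  ring

/-- The curvature components of the 3-dimensional example:
`R(e₁,e₂,e₂,e₁) = 1`, `R(e₁,e₃,e₃,e₁) = 1`, `R(e₂,e₃,e₃,e₂) = -1`,
where `R(x,y,z,w) = g(R(x,y)z, w)`. -/
theorem curvature_components_3dim (nabla : V3 → V3 → V3) (hK : Koszul3 nabla) :
    gM3 (R3 nabla (e3 0) (e3 1) (e3 1)) (e3 0) = 1 ∧
    gM3 (R3 nabla (e3 0) (e3 2) (e3 2)) (e3 0) = 1 ∧
    gM3 (R3 nabla (e3 1) (e3 2) (e3 2)) (e3 1) = -1 := by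
  obtain rfl := hK.unique koszul3_nabla3
  refine ⟨?_, ?_, ?_⟩ <;>
    norm_num [R3, nabla3, br3, gM3, e3_zero, e3_one, e3_two, Matrix.cons_val_two,
      Matrix.tail_cons, Matrix.head_cons]
end
end

section
/- The 3-dimensional example admits a Ricci-like soliton with potential ξ and constants (λ, μ, ν) = (0, 1, -3): for all x, y ∈ 𝔤, ½(g(∇ₓξ, y) + g(x, ∇_yξ)) + ρ(x, y) + 0·g(x, y) + 1·g̃(x, y) - 3η(x)η(y) = 0, where ρ(y, z) is the trace of x ↦ ∇ₓ∇_y z - ∇_y∇ₓ z - ∇_{[x,y]} z and g̃(x, y) = g(x, φy) + η(x)η(y). -/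
noncomputable section

/-- The associated B-metric `g̃(x,y) = g(x, φy) + η(x)η(y)`. -/
def gt3 (x y : V3) : ℝ := gM3 x (phi3 y) + eta3 x * eta3 y

/-- The 3-dimensional example admits a Ricci-like soliton with potential `ξ` and
constants `(λ, μ, ν) = (0, 1, -3)`:
`½𝓛_ξ g + ρ + 0·g + 1·g̃ - 3 η⊗η = 0`. -/
theorem ricci_like_soliton_3dim (nabla : V3 → V3 → V3) (hK : Koszul3 nabla) :
    ∀ x y : V3,
      (1 / 2 : ℝ) * (gM3 (nabla x xi3) y + gM3 x (nabla y xi3)) + ric3 nabla x y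
        + 0 * gM3 x y + 1 * gt3 x y + (-3) * (eta3 x * eta3 y) = 0 := by
  have hnab : ∀ x y : V3, nabla x y = ![x 1 * y 2, -(x 0 * y 2), -(x 0 * y 1 + x 1 * y 0)] := by
    intro x y
    have h0 := hK x y (e3 0)
    have h1 := hK x y (e3 1)
    have h2 := hK x y (e3 2)
    simp [gM3, br3, e3, Pi.single_apply] at h0 h1 h2
    funext i
    fin_cases i <;> simp <;> linarith
  intro x y
  simp only [ric3, Fin.sum_univ_three, R3, hnab, gt3, gM3, eta3, xi3, phi3, br3, e3,
    Pi.sub_apply]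
  simp [Pi.single_apply]
  ring
end
end
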